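/- Let u ∈ P_∞⁺(0,M) satisfy u ≥ 0 in ℝ₊ⁿ, with u differentiable at every point of Π and ∇u = 0 on Π. Define ū : ℝⁿ → ℝ by ū(x) = u(x) for x₁ ≥ 0 and ū(x) = 0 for x₁ < 0. Then ū is differentiable at every point of Π with ∇ū = 0 there, and ū is a viscosity solution of F(D²ū) = χ_Ω in all of ℝⁿ, where Ω is the open set associated with u. (Zero-extension claim used in the proof of Theorem B.) -/

import Mathlib

open Metric Set MeasureTheory Filter

noncomputable section

attribute [local instance] Matrix.normedAddCommGroup Matrix.normedSpace

/-- Euclidean space ℝⁿ. -/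
abbrev En (n : ℕ) := EuclideanSpace ℝ (Fin n)

/-- The open half-space `{x : x₁ > 0}`. -/
def HplusSet (n : ℕ) [NeZero n] : Set (En n) := {x | 0 < x 0}

/-- The closed half-space `{x : x₁ ≥ 0}`. -/
def HcloSet (n : ℕ) [NeZero n] : Set (En n) := {x | 0 ≤ x 0}

/-- The hyperplane `Π = {x : x₁ = 0}`. -/
def PiSet (n : ℕ) [NeZero n] : Set (En n) := {x | x 0 = 0}

/-- The half-ball `B⁺(z,r)`. -/
def Bplus (n : ℕ) [NeZero n] (z : En n) (r : ℝ) : Set (En n) := HplusSet n ∩ ball z r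

/-- Operator norm of a matrix acting on Euclidean space. -/
def matOpNorm {n : ℕ} (N : Matrix (Fin n) (Fin n) ℝ) : ℝ :=
  ‖(Matrix.toEuclideanCLM (𝕜 := ℝ) N : EuclideanSpace ℝ (Fin n) →L[ℝ] EuclideanSpace ℝ (Fin n))‖

/-- The structural assumptions on the fully nonlinear operator `F`:
uniform ellipticity with constants `0 < lam ≤ Lam`, positive one-homogeneity,
convexity (on symmetric matrices) and `C¹` smoothness. -/
structure EllipticF (n : ℕ) (lam Lam : ℝ) (F : Matrix (Fin n) (Fin n) ℝ → ℝ) : Prop where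
  lam_pos : 0 < lam
  lam_le_Lam : lam ≤ Lam
  elliptic_lower : ∀ A N : Matrix (Fin n) (Fin n) ℝ, A.IsSymm → N.PosSemidef →
    lam * matOpNorm N ≤ F (A + N) - F A
  elliptic_upper : ∀ A N : Matrix (Fin n) (Fin n) ℝ, A.IsSymm → N.PosSemidef →
    F (A + N) - F A ≤ Lam * matOpNorm N
  homogeneous : ∀ (t : ℝ) (A : Matrix (Fin n) (Fin n) ℝ), F (t • A) = t * F A
  convexF : ConvexOn ℝ {A : Matrix (Fin n) (Fin n) ℝ | A.IsSymm} F
  smoothF : ContDiff ℝ 1 F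

/-- The quadratic polynomial `x ↦ c + b·x + ½ xᵀAx`. -/
def quadPoly {n : ℕ} (c : ℝ) (b : En n) (A : Matrix (Fin n) (Fin n) ℝ) (x : En n) : ℝ :=
  c + ∑ i, b i * x i + (1 / 2) * ∑ i, ∑ j, A i j * x i * x j

/-- `u` is a viscosity solution of `F(D²u) = g` in the open set `D`. -/
def ViscositySol {n : ℕ} (F : Matrix (Fin n) (Fin n) ℝ → ℝ) (g : En n → ℝ) (D : Set (En n))
    (u : En n → ℝ) : Prop :=
  ∀ x₀ ∈ D,
    (∀ (c : ℝ) (b : En n) (A : Matrix (Fin n) (Fin n) ℝ), A.IsSymm →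
      IsLocalMaxOn (fun x => u x - quadPoly c b A x) D x₀ → g x₀ ≤ F A) ∧
    (∀ (c : ℝ) (b : En n) (A : Matrix (Fin n) (Fin n) ℝ), A.IsSymm →
      IsLocalMinOn (fun x => u x - quadPoly c b A x) D x₀ → F A ≤ g x₀)

/-- Membership in the class `P_r⁺(z,M)` of local solutions, with associated open set `Ω`. -/
structure MemPplus {n : ℕ} [NeZero n] (F : Matrix (Fin n) (Fin n) ℝ → ℝ) (z : En n) (r M : ℝ)
    (u : En n → ℝ) (Ω : Set (En n)) : Prop where
  cont : ContinuousOn u (closure (Bplus n z r))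
  Ω_open : IsOpen Ω
  Ω_sub : Ω ⊆ HplusSet n
  sol : ViscositySol F (Ω.indicator fun _ => (1 : ℝ)) (Bplus n z r) u
  vanish : ∀ x ∈ Bplus n z r \ Ω, u x = 0 ∧ HasGradientAt u 0 x
  bdd : ∀ x ∈ Bplus n z r, |u x| ≤ M
  bdry_zero : ∀ x ∈ PiSet n ∩ ball (0 : En n) 1, u x = 0
  z_bdry : z ∈ frontier Ω

/-- Membership in the class `P_∞⁺(0,M)` of global solutions, with associated open set `Ω`. -/
structure MemPinf {n : ℕ} [NeZero n] (F : Matrix (Fin n) (Fin n) ℝ → ℝ) (M : ℝ)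
    (u : En n → ℝ) (Ω : Set (En n)) : Prop where
  cont : ContinuousOn u (HcloSet n)
  Ω_open : IsOpen Ω
  Ω_sub : Ω ⊆ HplusSet n
  sol : ViscositySol F (Ω.indicator fun _ => (1 : ℝ)) (HplusSet n) u
  vanish : ∀ x ∈ HplusSet n \ Ω, u x = 0 ∧ HasGradientAt u 0 x
  growth : ∀ x, |u x| ≤ M * (‖x‖ ^ 2 + 1)
  bdry_zero : ∀ x ∈ PiSet n, u x = 0
  zero_bdry : (0 : En n) ∈ frontier Ω

/-- The density `V_r(z,u) = vol(Ω⁻(u) ∩ B⁺(z,r)) / rⁿ`. -/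
def Vr {n : ℕ} [NeZero n] (u : En n → ℝ) (Ω : Set (En n)) (z : En n) (r : ℝ) : ℝ :=
  (volume ({x ∈ Ω | u x < 0} ∩ Bplus n z r)).toReal / r ^ n

/-- A modulus of continuity: nonnegative, nondecreasing on `(0,∞)` and tending to `0` at `0⁺`. -/
def IsModulus (σ : ℝ → ℝ) : Prop :=
  (∀ r : ℝ, 0 < r → 0 ≤ σ r) ∧ (∀ ⦃r s : ℝ⦄, 0 < r → r ≤ s → σ r ≤ σ s) ∧
    Tendsto σ (nhdsWithin 0 (Ioi 0)) (nhds 0)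


open Topology Matrix

section ZeroExtAux

variable {n : ℕ}

private lemma dir_nonpos' {α β : ℝ} {f : ℝ → ℝ}
    (hf : Tendsto (fun t => f t / t) (𝓝[>] (0:ℝ)) (𝓝 0))
    (h : ∀ᶠ t in 𝓝[>] (0:ℝ), t*α + t^2*β ≤ f t) : α ≤ 0 := by
  have h1 : Tendsto (fun t : ℝ => α + t*β) (𝓝[>] (0:ℝ)) (𝓝 α) := by
    have : Tendsto (fun t : ℝ => α + t*β) (𝓝 (0:ℝ)) (𝓝 (α + 0*β)) :=
      tendsto_const_nhds.add (tendsto_id.mul tendsto_const_nhds)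
    simpa using this.mono_left nhdsWithin_le_nhds
  have h2 : ∀ᶠ t in 𝓝[>] (0:ℝ), α + t*β ≤ f t / t := by
    filter_upwards [h, self_mem_nhdsWithin] with t ht ht'
    rw [le_div_iff₀ ht']
    nlinarith [ht']
  exact le_of_tendsto_of_tendsto h1 hf h2

private lemma beta_nonpos' {β : ℝ} (h : ∀ᶠ t in 𝓝[>] (0:ℝ), t^2 * β ≤ 0) : β ≤ 0 := by
  obtain ⟨t, ht, ht'⟩ := (h.and self_mem_nhdsWithin).exists
  nlinarith [ht, ht', pow_pos ht' 2]

/-- linear part of the quadratic along a direction -/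
private def alf (b : En n) (A : Matrix (Fin n) (Fin n) ℝ) (x v : En n) : ℝ :=
  ∑ i, b i * v i + (1/2) * ∑ i, ∑ j, (A i j * x i * v j + A i j * v i * x j)

/-- quadratic part of the quadratic along a direction -/
private def bet (A : Matrix (Fin n) (Fin n) ℝ) (v : En n) : ℝ :=
  (1/2) * ∑ i, ∑ j, A i j * v i * v j

private lemma quad_expand (c : ℝ) (b : En n) (A : Matrix (Fin n) (Fin n) ℝ)
    (x v : En n) (t : ℝ) :
    quadPoly c b A (x + t • v) - quadPoly c b A x = t * alf b A x v + t^2 * bet A v := by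
  simp only [quadPoly, alf, bet, PiLp.add_apply, PiLp.smul_apply, smul_eq_mul, mul_add, add_mul,
    Finset.sum_add_distrib, Finset.mul_sum]
  have hS1 : ∑ i, b i * (t * v i) = ∑ i, t * (b i * v i) :=
    Finset.sum_congr rfl fun i _ => by ring
  have hS2 : (∑ i, ∑ j, 1/2 * (A i j * (t * v i) * x j))
      = ∑ i, ∑ j, t * (1/2 * (A i j * v i * x j)) :=
    Finset.sum_congr rfl fun i _ => Finset.sum_congr rfl fun j _ => by ring
  have hS3 : (∑ i, ∑ j, 1/2 * (A i j * x i * (t * v j)))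
      = ∑ i, ∑ j, t * (1/2 * (A i j * x i * v j)) :=
    Finset.sum_congr rfl fun i _ => Finset.sum_congr rfl fun j _ => by ring
  have hS4 : (∑ i, ∑ j, 1/2 * (A i j * (t * v i) * (t * v j)))
      = ∑ i, ∑ j, t^2 * (1/2 * (A i j * v i * v j)) :=
    Finset.sum_congr rfl fun i _ => Finset.sum_congr rfl fun j _ => by ring
  rw [hS1, hS2, hS3, hS4]
  ring

private lemma bet_neg (A : Matrix (Fin n) (Fin n) ℝ) (v : En n) :
    bet (-A) v = - bet A v := by
  simp only [bet, Matrix.neg_apply, neg_mul, Finset.sum_neg_distrib, mul_neg]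

private lemma posSemidef_of_form {A : Matrix (Fin n) (Fin n) ℝ} (hA : A.IsSymm)
    (h : ∀ v : En n, 0 ≤ bet A v) : A.PosSemidef := by
  constructor
  · ext i j
    rw [Matrix.conjTranspose_apply]
    simpa using hA.apply i j
  · intro x
    have h2 := h ((WithLp.equiv 2 (Fin n → ℝ)).symm x)
    simp only [bet, WithLp.equiv_symm_apply, PiLp.toLp_apply] at h2
    have e : (x.sum fun i xi => x.sum fun j xj => star xi * A i j * xj)
        = ∑ i, ∑ j, A i j * x i * x j := by
      rw [Finsupp.sum_fintype _ _ (fun i => by simp)]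
      refine Finset.sum_congr rfl fun i _ => ?_
      rw [Finsupp.sum_fintype _ _ (fun j => by simp)]
      exact Finset.sum_congr rfl fun j _ => by rw [star_trivial]; ring
    rw [e]
    linarith

private lemma F_zero {lam Lam : ℝ} {F : Matrix (Fin n) (Fin n) ℝ → ℝ}
    (hF : EllipticF n lam Lam F) : F 0 = 0 := by
  simpa using hF.homogeneous 0 0

private lemma F_nonneg_of_psd {lam Lam : ℝ} {F : Matrix (Fin n) (Fin n) ℝ → ℝ}
    (hF : EllipticF n lam Lam F) {A : Matrix (Fin n) (Fin n) ℝ} (h : A.PosSemidef) :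
    0 ≤ F A := by
  have hl := hF.elliptic_lower 0 A Matrix.isSymm_zero h
  rw [zero_add, F_zero hF, sub_zero] at hl
  have hn : (0:ℝ) ≤ matOpNorm A := norm_nonneg _
  nlinarith [hF.lam_pos]

private lemma F_nonpos_of_nsd {lam Lam : ℝ} {F : Matrix (Fin n) (Fin n) ℝ → ℝ}
    (hF : EllipticF n lam Lam F) {A : Matrix (Fin n) (Fin n) ℝ} (hA : A.IsSymm)
    (h : (-A).PosSemidef) : F A ≤ 0 := by
  have hl := hF.elliptic_lower A (-A) hA h
  rw [add_neg_cancel, F_zero hF, zero_sub] at hl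
  have hn : (0:ℝ) ≤ matOpNorm (-A) := norm_nonneg _
  nlinarith [hF.lam_pos]

private lemma isSymm_neg {A : Matrix (Fin n) (Fin n) ℝ} (hA : A.IsSymm) : (-A).IsSymm := by
  show Matrix.transpose (-A) = -A
  rw [Matrix.transpose_neg, hA]

end ZeroExtAux

/-- Zero-extension claim used in the proof of Theorem B: extending a nonnegative global
solution `u ∈ P_∞⁺(0,M)` (with `∇u = 0` on `Π`) by zero to the lower half-space yields a
function differentiable on `Π` with vanishing gradient there, which is a viscosity solution of
`F(D²ū) = χ_Ω` in all of `ℝⁿ`. -/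
theorem zero_extension (n : ℕ) [NeZero n] (hn : 2 ≤ n) (lam Lam : ℝ)
    (F : Matrix (Fin n) (Fin n) ℝ → ℝ) (hF : EllipticF n lam Lam F)
    (M : ℝ) (hM : 0 < M) (u : En n → ℝ) (Ω : Set (En n)) (hu : MemPinf F M u Ω)
    (hnonneg : ∀ x ∈ HplusSet n, 0 ≤ u x)
    (hgrad : ∀ x ∈ PiSet n, HasGradientWithinAt u 0 (HcloSet n) x) :
    (∀ x ∈ PiSet n, HasGradientAt (fun y : En n => if 0 ≤ y 0 then u y else 0) 0 x) ∧
      ViscositySol F (Ω.indicator fun _ => (1 : ℝ)) Set.univ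
        (fun y : En n => if 0 ≤ y 0 then u y else 0) := by
  classical
  set ub : En n → ℝ := fun y : En n => if 0 ≤ y 0 then u y else 0 with hub_def
  have hub_u : ∀ y : En n, 0 ≤ y 0 → ub y = u y := fun y hy => if_pos hy
  have hub_zero : ∀ y : En n, y 0 ≤ 0 → ub y = 0 := by
    intro y hy
    rcases eq_or_lt_of_le hy with hE | hL
    · rw [hub_u y hE.ge]; exact hu.bdry_zero y hE
    · exact if_neg (not_le.mpr hL)
  have hub_nonneg : ∀ y, 0 ≤ ub y := by
    intro y
    rcases le_or_gt (y 0) 0 with hy | hy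
    · rw [hub_zero y hy]
    · rw [hub_u y hy.le]; exact hnonneg y hy
  -- Part 1: differentiability on Π with zero gradient
  have hfd : ∀ x ∈ PiSet n, HasFDerivAt ub (0 : En n →L[ℝ] ℝ) x := by
    intro x hx
    have hx0 : x 0 = 0 := hx
    have hg := hgrad x hx
    rw [hasGradientWithinAt_iff_hasFDerivWithinAt, map_zero] at hg
    have hU : HasFDerivWithinAt ub 0 (HcloSet n) x :=
      hg.congr (fun y hy => hub_u y hy) (hub_u x hx0.ge)
    have hL : HasFDerivWithinAt ub 0 {y : En n | y 0 ≤ 0} x :=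
      (hasFDerivWithinAt_const (𝕜 := ℝ) (0:ℝ) x _).congr (fun y hy => hub_zero y hy) (hub_zero x hx0.le)
    have huniv := hU.union hL
    rw [show HcloSet n ∪ {y : En n | y 0 ≤ 0} = univ from
      eq_univ_of_forall fun y => (le_or_gt 0 (y 0)).elim Or.inl fun hl => Or.inr hl.le] at huniv
    exact hasFDerivWithinAt_univ.mp huniv
  have part1 : ∀ x ∈ PiSet n, HasGradientAt ub 0 x := by
    intro x hx
    rw [hasGradientAt_iff_hasFDerivAt, map_zero]
    exact hfd x hx
  refine ⟨part1, ?_⟩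
  intro x₀ _
  have curve_full : ∀ w : En n, Tendsto (fun t : ℝ => x₀ + t • w) (𝓝 0) (𝓝 x₀) := by
    intro w
    have hc : Continuous fun t : ℝ => x₀ + t • w :=
      continuous_const.add (continuous_id.smul continuous_const)
    simpa using hc.tendsto 0
  have curve : ∀ w : En n, Tendsto (fun t : ℝ => x₀ + t • w) (𝓝[>] (0:ℝ)) (𝓝 x₀) :=
    fun w => (curve_full w).mono_left nhdsWithin_le_nhds
  have hf0 : Tendsto (fun t : ℝ => (0:ℝ) / t) (𝓝[>] (0:ℝ)) (𝓝 0) := by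
    simp only [zero_div]; exact tendsto_const_nhds
  have expand_neg : ∀ (c : ℝ) (b : En n) (A : Matrix (Fin n) (Fin n) ℝ) (v : En n) (t : ℝ),
      quadPoly c b A (x₀ + t • (-v)) - quadPoly c b A x₀
        = (-t) * alf b A x₀ v + t^2 * bet A v := by
    intro c b A v t
    rw [smul_neg, ← neg_smul]
    have h := quad_expand c b A x₀ v (-t)
    rw [neg_sq] at h
    exact h
  rcases lt_or_ge 0 (x₀ 0) with hx₀ | hx₀
  · -- interior point of the upper half-space: use the equation for u
    obtain ⟨hs1, hs2⟩ := hu.sol x₀ hx₀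
    constructor
    · intro c b A hA h
      refine hs1 c b A hA ?_
      have h' : ∀ᶠ y in 𝓝[HplusSet n] x₀,
          ub y - quadPoly c b A y ≤ ub x₀ - quadPoly c b A x₀ :=
        h.filter_mono (nhdsWithin_mono _ (subset_univ _))
      have hres : ∀ᶠ y in 𝓝[HplusSet n] x₀,
          u y - quadPoly c b A y ≤ u x₀ - quadPoly c b A x₀ := by
        filter_upwards [h', self_mem_nhdsWithin] with y hy hy'
        rwa [hub_u y (le_of_lt hy'), hub_u x₀ hx₀.le] at hy
      exact hres
    · intro c b A hA h
      refine hs2 c b A hA ?_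
      have h' : ∀ᶠ y in 𝓝[HplusSet n] x₀,
          ub x₀ - quadPoly c b A x₀ ≤ ub y - quadPoly c b A y :=
        h.filter_mono (nhdsWithin_mono _ (subset_univ _))
      have hres : ∀ᶠ y in 𝓝[HplusSet n] x₀,
          u x₀ - quadPoly c b A x₀ ≤ u y - quadPoly c b A y := by
        filter_upwards [h', self_mem_nhdsWithin] with y hy hy'
        rwa [hub_u y (le_of_lt hy'), hub_u x₀ hx₀.le] at hy
      exact hres
  · -- x₀ in the closed lower half-space
    have hΩ : x₀ ∉ Ω := fun hmem => absurd (hu.Ω_sub hmem) (not_lt.mpr hx₀)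
    have hind : Ω.indicator (fun _ => (1:ℝ)) x₀ = 0 := indicator_of_notMem hΩ _
    have hubx₀ : ub x₀ = 0 := hub_zero x₀ hx₀
    constructor
    · -- supersolution test: 0 ≤ F A
      intro c b A hA h
      rw [hind]
      have hev : ∀ᶠ y in 𝓝 x₀, quadPoly c b A x₀ ≤ quadPoly c b A y := by
        have h' : ∀ᶠ y in 𝓝[univ] x₀,
            ub y - quadPoly c b A y ≤ ub x₀ - quadPoly c b A x₀ := h
        rw [nhdsWithin_univ] at h'
        filter_upwards [h'] with y hy
        have h0 := hub_nonneg y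
        rw [hubx₀] at hy
        linarith
      refine F_nonneg_of_psd hF (posSemidef_of_form hA ?_)
      intro v
      have hvplus : ∀ᶠ t in 𝓝[>] (0:ℝ),
          t * (-(alf b A x₀ v)) + t^2 * (-(bet A v)) ≤ (0:ℝ) := by
        filter_upwards [(curve v).eventually hev] with t ht
        have hq := quad_expand c b A x₀ v t
        linarith
      have hvminus : ∀ᶠ t in 𝓝[>] (0:ℝ),
          t * (alf b A x₀ v) + t^2 * (-(bet A v)) ≤ (0:ℝ) := by
        filter_upwards [(curve (-v)).eventually hev] with t ht
        have hq := expand_neg c b A v t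
        linarith
      have h1 : -(alf b A x₀ v) ≤ 0 := dir_nonpos' (f := fun _ => (0:ℝ)) hf0 hvplus
      have h2 : alf b A x₀ v ≤ 0 := dir_nonpos' (f := fun _ => (0:ℝ)) hf0 hvminus
      have hα : alf b A x₀ v = 0 := le_antisymm h2 (by linarith)
      have h3 : -(bet A v) ≤ 0 := by
        apply beta_nonpos'
        filter_upwards [hvplus] with t ht
        rw [hα] at ht
        linarith
      linarith
    · -- subsolution test: F A ≤ 0
      intro c b A hA h
      rw [hind]
      have hev : ∀ᶠ y in 𝓝 x₀, quadPoly c b A y - quadPoly c b A x₀ ≤ ub y := by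
        have h' : ∀ᶠ y in 𝓝[univ] x₀,
            ub x₀ - quadPoly c b A x₀ ≤ ub y - quadPoly c b A y := h
        rw [nhdsWithin_univ] at h'
        filter_upwards [h'] with y hy
        rw [hubx₀] at hy
        linarith
      have key : ∀ v : En n, ∀ᶠ t in 𝓝[>] (0:ℝ),
          t * alf b A x₀ v + t^2 * bet A v ≤ ub (x₀ + t • v) := by
        intro v
        filter_upwards [(curve v).eventually hev] with t ht
        rw [← quad_expand c b A x₀ v t]
        exact ht
      have keyneg : ∀ v : En n, ∀ᶠ t in 𝓝[>] (0:ℝ),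
          t * (-(alf b A x₀ v)) + t^2 * bet A v ≤ ub (x₀ + t • (-v)) := by
        intro v
        filter_upwards [(curve (-v)).eventually hev] with t ht
        have hq := expand_neg c b A v t
        linarith
      have hβ : ∀ v : En n, bet A v ≤ 0 := by
        rcases eq_or_lt_of_le hx₀ with hPi | hlow
        · -- x₀ on the hyperplane: use the zero gradient of ub
          have hx₀Pi : x₀ ∈ PiSet n := hPi
          have hder := hfd x₀ hx₀Pi
          have hlo : ∀ w : En n,
              Tendsto (fun t : ℝ => ub (x₀ + t • w) / t) (𝓝[>] (0:ℝ)) (𝓝 0) := by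
            intro w
            have h1 : (fun y => ub y - ub x₀ - (0 : En n →L[ℝ] ℝ) (y - x₀))
                =o[𝓝 x₀] fun y => y - x₀ := hder.isLittleO
            simp only [hubx₀, ContinuousLinearMap.zero_apply, sub_zero] at h1
            have h2 := h1.comp_tendsto (curve_full w)
            have h3 : (fun t : ℝ => (x₀ + t • w) - x₀) =O[𝓝 (0:ℝ)] (fun t : ℝ => t) := by
              have he : (fun t : ℝ => (x₀ + t • w) - x₀) = fun t : ℝ => t • w := by
                funext t; rw [add_sub_cancel_left]
              rw [he]
              refine Asymptotics.IsBigO.of_bound ‖w‖ ?_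
              filter_upwards with t
              rw [norm_smul]
              exact le_of_eq (mul_comm _ _)
            have h4 := h2.trans_isBigO h3
            exact h4.tendsto_div_nhds_zero.mono_left nhdsWithin_le_nhds
          have hα : ∀ v : En n, alf b A x₀ v = 0 := by
            intro v
            have ha1 : alf b A x₀ v ≤ 0 := dir_nonpos' (hlo v) (key v)
            have ha2 : -(alf b A x₀ v) ≤ 0 := dir_nonpos' (hlo (-v)) (keyneg v)
            linarith
          intro v
          rcases le_or_gt (v 0) 0 with hv | hv
          · apply beta_nonpos'
            filter_upwards [key v, self_mem_nhdsWithin] with t ht htpos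
            have hz : ub (x₀ + t • v) = 0 := by
              apply hub_zero
              have hcoord : (x₀ + t • v) 0 = x₀ 0 + t * v 0 := by
                simp [PiLp.add_apply, PiLp.smul_apply, smul_eq_mul]
              rw [hcoord, hPi, zero_add]
              exact mul_nonpos_of_nonneg_of_nonpos (le_of_lt htpos) hv
            rw [hz, hα v] at ht
            linarith
          · apply beta_nonpos'
            filter_upwards [keyneg v, self_mem_nhdsWithin] with t ht htpos
            have hz : ub (x₀ + t • (-v)) = 0 := by
              apply hub_zero
              have hcoord : (x₀ + t • (-v)) 0 = x₀ 0 + t * (-(v 0)) := by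
                simp [PiLp.add_apply, PiLp.smul_apply, PiLp.neg_apply, smul_eq_mul]
              rw [hcoord, hPi, zero_add]
              exact mul_nonpos_of_nonneg_of_nonpos (le_of_lt htpos)
                (neg_nonpos.mpr hv.le)
            rw [hz, hα v] at ht
            linarith
        · -- x₀ strictly inside the lower half-space: ub vanishes near x₀
          have hcont : Continuous fun y : En n => y 0 :=
            (continuous_apply (0 : Fin n)).comp (PiLp.continuous_ofLp 2 fun _ : Fin n => ℝ)
          have hopen : IsOpen {y : En n | y 0 < 0} := isOpen_lt hcont continuous_const
          have hzero : ∀ᶠ y in 𝓝 x₀, ub y = 0 := by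
            filter_upwards [hopen.mem_nhds hlow] with y hy
            exact hub_zero y hy.le
          intro v
          have key0 : ∀ᶠ t in 𝓝[>] (0:ℝ),
              t * alf b A x₀ v + t^2 * bet A v ≤ (0:ℝ) := by
            filter_upwards [key v, (curve v).eventually hzero] with t ht hz
            rw [hz] at ht
            exact ht
          have key0' : ∀ᶠ t in 𝓝[>] (0:ℝ),
              t * (-(alf b A x₀ v)) + t^2 * bet A v ≤ (0:ℝ) := by
            filter_upwards [keyneg v, (curve (-v)).eventually hzero] with t ht hz
            rw [hz] at ht
            exact ht
          have ha1 : alf b A x₀ v ≤ 0 := dir_nonpos' (f := fun _ => (0:ℝ)) hf0 key0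
          have ha2 : -(alf b A x₀ v) ≤ 0 := dir_nonpos' (f := fun _ => (0:ℝ)) hf0 key0'
          have hα : alf b A x₀ v = 0 := le_antisymm ha1 (by linarith)
          apply beta_nonpos'
          filter_upwards [key0] with t ht
          rw [hα] at ht
          linarith
      refine F_nonpos_of_nsd hF hA (posSemidef_of_form (isSymm_neg hA) ?_)
      intro v
      rw [bet_neg]
      linarith [hβ v]
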